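/- For the ZDT2 problem with d = 30 variables, a point x ∈ [0,1]^30 is Pareto optimal if and only if x_i = 0 for all i = 2, ..., 30, and the resulting Pareto front equals {(t, 1 − t^2) : t ∈ [0, 1]}. -/

import Mathlib

/-- `g(x) = 1 + (9/(30−1))·Σ_{i=2}^{30} x_i` for ZDT2 (0-indexed: sum over `i ≠ 0`). -/
noncomputable def zdt2G (x : Fin 30 → ℝ) : ℝ :=
  1 + (9 / 29) * ∑ i ∈ Finset.univ.erase (0 : Fin 30), x i

/-- `f2(x) = g(x)·(1 − (x_1/g(x))^2)` for ZDT2. -/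
noncomputable def zdt2F2 (x : Fin 30 → ℝ) : ℝ :=
  zdt2G x * (1 - (x 0 / zdt2G x) ^ 2)

/-!
Writing `f₂ = g - x₁² / g`, for `g ≥ 1` one has `f₂ ≥ 1 - x₁²`, with equality exactly when
`g = 1`, i.e. when `x₂ = ⋯ = x₃₀ = 0`. Hence zeroing the tail of a point keeps `f₁` and strictly
lowers `f₂` unless the tail already vanishes, while on the slice `g = 1` the curve `t ↦ 1 - t²`
is strictly decreasing on `[0, 1]`, so no feasible point dominates a point of that slice.
-/

lemma one_sub_sq_lt_mul_one_sub_div_sq {g : ℝ} (hg : 1 < g) (t : ℝ) :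
    1 - t ^ 2 < g * (1 - (t / g) ^ 2) := by
  have hdiv : t ^ 2 / g ≤ t ^ 2 := div_le_self (sq_nonneg t) hg.le
  have hg0 : g ≠ 0 := by positivity
  calc 1 - t ^ 2 < g - t ^ 2 / g := by linarith
    _ = g * (1 - (t / g) ^ 2) := by field_simp

lemma one_sub_sq_le_mul_one_sub_div_sq {g : ℝ} (hg : 1 ≤ g) (t : ℝ) :
    1 - t ^ 2 ≤ g * (1 - (t / g) ^ 2) := by
  rcases hg.eq_or_lt with rfl | hg
  · simp
  · exact (one_sub_sq_lt_mul_one_sub_div_sq hg t).le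

lemma single_mem_Icc {ι : Type*} [DecidableEq ι] (i₀ : ι) {t : ℝ} (ht : t ∈ Set.Icc (0 : ℝ) 1)
    (i : ι) : (Pi.single i₀ t : ι → ℝ) i ∈ Set.Icc (0 : ℝ) 1 := by
  rcases eq_or_ne i i₀ with rfl | hi
  · simpa using ht
  · simp [hi]

section ZDT2

variable {x : Fin 30 → ℝ}

lemma one_le_zdt2G (hx : ∀ i, 0 ≤ x i) : 1 ≤ zdt2G x := by
  have : 0 ≤ ∑ i ∈ Finset.univ.erase (0 : Fin 30), x i := Finset.sum_nonneg fun i _ => hx i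
  unfold zdt2G
  linarith

lemma zdt2G_eq_one (hz : ∀ i : Fin 30, i ≠ 0 → x i = 0) : zdt2G x = 1 := by
  simp [zdt2G, Finset.sum_eq_zero fun i hi => hz i (Finset.ne_of_mem_erase hi)]

lemma zdt2G_eq_one_iff (hx : ∀ i, 0 ≤ x i) : zdt2G x = 1 ↔ ∀ i : Fin 30, i ≠ 0 → x i = 0 := by
  refine ⟨fun hg i hi => ?_, zdt2G_eq_one⟩
  have hsum : ∑ j ∈ Finset.univ.erase (0 : Fin 30), x j = 0 := by
    rw [zdt2G] at hg
    linarith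
  exact (Finset.sum_eq_zero_iff_of_nonneg fun j _ => hx j).1 hsum i (by simp [hi])

lemma one_sub_sq_le_zdt2F2 (hx : ∀ i, 0 ≤ x i) : 1 - x 0 ^ 2 ≤ zdt2F2 x :=
  one_sub_sq_le_mul_one_sub_div_sq (one_le_zdt2G hx) (x 0)

lemma zdt2F2_eq_one_sub_sq (hz : ∀ i : Fin 30, i ≠ 0 → x i = 0) : zdt2F2 x = 1 - x 0 ^ 2 := by
  rw [zdt2F2, zdt2G_eq_one hz]
  ring

lemma zdt2F2_eq_one_sub_sq_iff (hx : ∀ i, 0 ≤ x i) :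
    zdt2F2 x = 1 - x 0 ^ 2 ↔ ∀ i : Fin 30, i ≠ 0 → x i = 0 := by
  refine ⟨fun hf => (zdt2G_eq_one_iff hx).1 ?_, zdt2F2_eq_one_sub_sq⟩
  by_contra hg
  exact (one_sub_sq_lt_mul_one_sub_div_sq ((one_le_zdt2G hx).lt_of_ne' hg) (x 0)).ne' hf

lemma zdt2F2_single (t : ℝ) : zdt2F2 (Pi.single 0 t) = 1 - t ^ 2 := by
  simpa using zdt2F2_eq_one_sub_sq (x := Pi.single 0 t) fun i hi => by simp [hi]

end ZDT2

/-- For ZDT2 with `d = 30`, a point `x ∈ [0,1]^30` is Pareto optimal iff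
`x_i = 0` for all `i = 2, ..., 30`, and the resulting Pareto front equals
`{(t, 1 − t^2) : t ∈ [0, 1]}`. -/
theorem zdt2_pareto_optimal_iff_and_front :
    (∀ x : Fin 30 → ℝ, (∀ i, x i ∈ Set.Icc (0 : ℝ) 1) →
      ((¬ ∃ y : Fin 30 → ℝ, (∀ i, y i ∈ Set.Icc (0 : ℝ) 1) ∧
          y 0 ≤ x 0 ∧ zdt2F2 y ≤ zdt2F2 x ∧ (y 0 < x 0 ∨ zdt2F2 y < zdt2F2 x)) ↔
        ∀ i : Fin 30, i ≠ 0 → x i = 0)) ∧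
    {p : ℝ × ℝ | ∃ x : Fin 30 → ℝ, (∀ i, x i ∈ Set.Icc (0 : ℝ) 1) ∧
        (∀ i : Fin 30, i ≠ 0 → x i = 0) ∧ p = (x 0, zdt2F2 x)} =
      {p : ℝ × ℝ | ∃ t ∈ Set.Icc (0 : ℝ) 1, p = (t, 1 - t ^ 2)} := by
  refine ⟨fun x hx => ⟨fun hopt => ?_, fun hz hdom => ?_⟩, ?_⟩
  · have hx0 : ∀ i, 0 ≤ x i := fun i => (hx i).1
    refine (zdt2F2_eq_one_sub_sq_iff hx0).1 (le_antisymm ?_ (one_sub_sq_le_zdt2F2 hx0))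
    have hproj := zdt2F2_single (x 0)
    by_contra! hlt
    exact hopt ⟨Pi.single 0 (x 0), single_mem_Icc 0 (hx 0), by simp, by linarith,
      Or.inr (by linarith)⟩
  · obtain ⟨y, hy, hy0, hf, hlt⟩ := hdom
    have hfx := zdt2F2_eq_one_sub_sq hz
    have hfy := one_sub_sq_le_zdt2F2 fun i => (hy i).1
    have hfirst : y 0 = x 0 := by nlinarith [(hy 0).1]
    rcases hlt with h | h
    · exact h.ne hfirst
    · rw [hfirst] at hfy
      linarith
  · ext p
    constructor
    · rintro ⟨x, hx, hz, rfl⟩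
      exact ⟨x 0, hx 0, by rw [zdt2F2_eq_one_sub_sq hz]⟩
    · rintro ⟨t, ht, rfl⟩
      exact ⟨Pi.single 0 t, single_mem_Icc 0 ht, fun i hi => by simp [hi], by simp [zdt2F2_single]⟩
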